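/- Fix an integer n ≥ 1 and an integer l with 0 ≤ l ≤ n−1, and take λ = 1, θ = 1/2. With h = n, let q^{(n,n)}_0, …, q^{(n,n)}_{n−l−1} ∈ ℝ[j,k] be the coefficients of the quotient polynomial Q_{n,n,l}, and let c^{(1,1/2)}_{n,n,l} denote the coefficient of the monomial j^{n−l−1} (i.e., j^{n−l−1}k^0) in q^{(n,n)}_{n−l−1}. Then c^{(1,1/2)}_{n,n,l} = (−1)^{n−l−1} · C(n, l+1) / 2^{2n−1}. -/

import Mathlib

open Polynomial

/-- Rising factorial in a commutative ring: `(a)_m = a (a+1) ⋯ (a+m−1)`, with `(a)_0 = 1`. -/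
noncomputable def rfp {S : Type*} [CommRing S] (a : S) (m : ℕ) : S :=
  ∏ i ∈ Finset.range m, (a + (i : S))

/-- The base ring `R = ℝ[j,k]`. -/
abbrev R2 : Type := MvPolynomial (Fin 2) ℝ

/-- The variable `j` as a constant of `R[d]`. -/
noncomputable def Jv : Polynomial R2 := Polynomial.C (MvPolynomial.X 0)

/-- The variable `k` as a constant of `R[d]`. -/
noncomputable def Kv : Polynomial R2 := Polynomial.C (MvPolynomial.X 1)

/-- Embedding of real scalars into `R[d]`. -/
noncomputable def cst (x : ℝ) : Polynomial R2 := Polynomial.C (MvPolynomial.C x)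

/-- The dividend `P_{n,n}` (case `h = n`, `λ = 1`, `θ = 1/2`). -/
noncomputable def Pnn (n : ℕ) : Polynomial R2 :=
  (X - 2 * Jv - 1) * (X + 2 * (n : Polynomial R2) - 2 * Jv - 1) * rfp (X - Jv) n *
    rfp (cst (1 / 2) * X - Jv) n *
    rfp (cst (1 / 2) * X - Jv + Kv) n *
    rfp (cst (1 / 2) * X - Jv + Kv) n

/-- The divisor `D_{n,n,l}` (case `h = n`, `λ = 1`, `θ = 1/2`). -/
noncomputable def Dnnl (n l : ℕ) : Polynomial R2 :=
  cst (1 / 2) * X ^ (l + 1) * (X + (n : Polynomial R2) - 2 * Jv - 1) *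
    rfp (cst (1 / 2) * X - Jv) n *
    rfp (X - 2 * Jv - 1 + Kv) (2 * n + 1)

/-! Substitute `k = 0`, `j = T` and `d = sT`. The `T`-degree becomes the total degree in
`(j, d)`, and the `j^(n-l-1)`-coefficient of `Q.coeff 0` is the constant term in `s` of the
`T^(n-l-1)`-coefficient `W` of the image of `Q`. The remainder has `d`-degree `< 3n+l+3`, so its
`T`-coefficients have `s`-degree `< 3n+l+3`, the `s`-degree of the leading `T`-coefficient of
the image of `D`. Hence the image of `Q` has `T`-degree `≤ n-l-1`, and comparing
`T^(4n+2)`-coefficients gives, in `ℝ[s]`,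
  `2^(-3n) (s-1)^n (s-2)^(3n+2) = 2^(-n-1) s^(l+1) (s-2)^(3n+2) W + E`,  `deg E < 3n+l+3`.
Thus `2^(-3n) (s-1)^n - 2^(-n-1) s^(l+1) W = E / (s-2)^(3n+2)` has degree `≤ l`, and its
`s^(l+1)`-coefficient `2^(-3n) (-1)^(n-l-1) C(n,l+1) - 2^(-n-1) W(0)` vanishes. -/

namespace Polynomial

section RisingFactorial

variable {A : Type*} [CommRing A] {a : A}

lemma rfp_C_mul_X_add_C (a b : A) (m : ℕ) :
    rfp (C a * X + C b) m = ∏ i ∈ Finset.range m, (C a * X + C (b + i)) :=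
  Finset.prod_congr rfl fun i _ => by rw [C_add, map_natCast, add_assoc]

lemma C_mul_X_add_C_ne_zero (ha : a ≠ 0) (b : A) : C a * X + C b ≠ 0 :=
  ne_zero_of_natDegree_gt (n := 0) (by rw [natDegree_linear ha]; exact one_pos)

lemma natDegree_rfp_C_mul_X_add_C [IsDomain A] (ha : a ≠ 0) (b : A) (m : ℕ) :
    (rfp (C a * X + C b) m).natDegree = m := by
  rw [rfp_C_mul_X_add_C, natDegree_prod _ _ fun i _ => C_mul_X_add_C_ne_zero ha _]
  simp only [natDegree_linear ha, Finset.sum_const, Finset.card_range, smul_eq_mul, mul_one]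

lemma leadingCoeff_rfp_C_mul_X_add_C [IsDomain A] (ha : a ≠ 0) (b : A) (m : ℕ) :
    (rfp (C a * X + C b) m).leadingCoeff = a ^ m := by
  rw [rfp_C_mul_X_add_C, leadingCoeff_prod]
  simp only [leadingCoeff_linear ha, Finset.prod_const, Finset.card_range]

lemma rfp_C_mul_X_add_C_ne_zero [IsDomain A] (ha : a ≠ 0) (b : A) (m : ℕ) :
    rfp (C a * X + C b) m ≠ 0 :=
  leadingCoeff_ne_zero.mp (by rw [leadingCoeff_rfp_C_mul_X_add_C ha]; exact pow_ne_zero m ha)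

lemma degree_rfp_C_mul_X_add_C [IsDomain A] (ha : a ≠ 0) (b : A) (m : ℕ) :
    (rfp (C a * X + C b) m).degree = (m : WithBot ℕ) := by
  rw [degree_eq_natDegree (rfp_C_mul_X_add_C_ne_zero ha b m), natDegree_rfp_C_mul_X_add_C ha]

end RisingFactorial

variable {K : Type*} [CommRing K] [IsDomain K]

lemma natDegree_le_of_eq_mul_add {P D Q E : K[X][X]} {m : ℕ} (h : P = D * Q + E)
    (hP : P.natDegree ≤ D.natDegree + m)
    (hE : ∀ i, (E.coeff i).natDegree < D.leadingCoeff.natDegree) : Q.natDegree ≤ m := by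
  by_contra! hQ
  have hQ0 : Q ≠ 0 := ne_zero_of_natDegree_gt hQ
  have hD0 : D ≠ 0 := by
    rintro rfl
    simpa using hE 0
  have htop : E.coeff (D.natDegree + Q.natDegree) = -(D.leadingCoeff * Q.leadingCoeff) := by
    have hPtop : P.coeff (D.natDegree + Q.natDegree) = 0 :=
      coeff_eq_zero_of_natDegree_lt (by omega)
    rw [h, coeff_add, coeff_mul_degree_add_degree] at hPtop
    exact eq_neg_of_add_eq_zero_right hPtop
  have := hE (D.natDegree + Q.natDegree)
  rw [htop, natDegree_neg, natDegree_mul (leadingCoeff_ne_zero.mpr hD0)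
    (leadingCoeff_ne_zero.mpr hQ0)] at this
  omega

lemma coeff_eq_of_eq_mul_add {R : Type*} [CommSemiring R] {P D Q E : R[X]} {m : ℕ}
    (h : P = D * Q + E) (hQ : Q.natDegree ≤ m) :
    P.coeff (D.natDegree + m) = D.leadingCoeff * Q.coeff m + E.coeff (D.natDegree + m) := by
  rw [h, coeff_add, coeff_mul_add_eq_of_natDegree_le le_rfl hQ, leadingCoeff]

lemma coeff_zero_eq_of_natDegree_mul_sub_X_pow_mul_lt {g f W : K[X]} {k : ℕ} (hg : g ≠ 0)
    (h : (g * (f - X ^ k * W)).natDegree < g.natDegree + k) : W.coeff 0 = f.coeff k := by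
  have hk : (f - X ^ k * W).coeff k = 0 := by
    rcases eq_or_ne (f - X ^ k * W) 0 with h0 | h0
    · rw [h0, coeff_zero]
    · rw [natDegree_mul hg h0] at h
      exact coeff_eq_zero_of_natDegree_lt (by omega)
  rw [coeff_sub, coeff_X_pow_mul', if_pos le_rfl, Nat.sub_self, sub_eq_zero] at hk
  exact hk.symm

end Polynomial

-- `j ↦ X`, `k ↦ 0`
noncomputable def evalKZero : R2 →+* ℝ[X] :=
  (mapRingHom MvPolynomial.constantCoeff).comp (MvPolynomial.finSuccEquiv ℝ 1).toRingHom

lemma coeff_evalKZero (r : R2) (m : ℕ) :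
    (evalKZero r).coeff m = r.coeff (Finsupp.single 0 m) := by
  simp [evalKZero, MvPolynomial.constantCoeff_eq, MvPolynomial.finSuccEquiv_coeff_coeff,
    Finsupp.cons_zero_eq_single_zero]

-- `j ↦ T`, `d ↦ s T`, `k ↦ 0`, with `T` the outer and `s` the inner variable
noncomputable def gradedSubst : R2[X] →+* ℝ[X][X] :=
  eval₂RingHom ((mapRingHom C).comp evalKZero) (C X * X)

lemma gradedSubst_X : gradedSubst X = C X * X := eval₂_X _ _

lemma gradedSubst_C (r : R2) : gradedSubst (C r) = (evalKZero r).map C := eval₂_C _ _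

lemma gradedSubst_Jv : gradedSubst Jv = X := by
  simp [Jv, gradedSubst_C, evalKZero, MvPolynomial.finSuccEquiv_X_zero]

lemma gradedSubst_Kv : gradedSubst Kv = 0 := by
  have : evalKZero (MvPolynomial.X 1) = 0 := by
    change map _ (MvPolynomial.finSuccEquiv ℝ 1 (MvPolynomial.X (Fin.succ 0))) = 0
    rw [MvPolynomial.finSuccEquiv_X_succ, map_C, MvPolynomial.constantCoeff_X, C_0]
  rw [Kv, gradedSubst_C, this, Polynomial.map_zero]

lemma gradedSubst_cst (x : ℝ) : gradedSubst (cst x) = C (C x) := by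
  simp [cst, gradedSubst_C, evalKZero, MvPolynomial.finSuccEquiv_apply]

lemma gradedSubst_rfp (p : R2[X]) (m : ℕ) : gradedSubst (rfp p m) = rfp (gradedSubst p) m := by
  simp [rfp, map_prod]

lemma coeff_gradedSubst_monomial (e m : ℕ) (r : R2) :
    (gradedSubst (monomial e r)).coeff m
      = if e ≤ m then C ((evalKZero r).coeff (m - e)) * X ^ e else 0 := by
  rw [← C_mul_X_pow_eq_monomial, map_mul, map_pow, gradedSubst_C, gradedSubst_X, mul_pow,
    ← C_pow, mul_left_comm, coeff_C_mul, coeff_mul_X_pow', coeff_map]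
  split_ifs
  · rw [mul_comm]
  · rw [mul_zero]

lemma natDegree_coeff_gradedSubst_le (p : R2[X]) (m : ℕ) :
    ((gradedSubst p).coeff m).natDegree ≤ p.natDegree := by
  conv_lhs => rw [p.as_sum_support]
  rw [map_sum, finsetSum_coeff]
  refine natDegree_sum_le_of_forall_le _ _ fun e he => ?_
  rw [coeff_gradedSubst_monomial]
  split_ifs
  · exact (natDegree_C_mul_X_pow_le _ _).trans (le_natDegree_of_mem_supp e he)
  · exact natDegree_zero.le.trans (Nat.zero_le _)

lemma coeff_zero_coeff_gradedSubst (p : R2[X]) (m : ℕ) :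
    ((gradedSubst p).coeff m).coeff 0 = (p.coeff 0).coeff (Finsupp.single 0 m) := by
  conv_lhs => rw [p.as_sum_support]
  rw [map_sum, finsetSum_coeff, finsetSum_coeff, Finset.sum_eq_single 0]
  · rw [coeff_gradedSubst_monomial]
    simp [coeff_evalKZero]
  · intro e _ he
    rw [coeff_gradedSubst_monomial]
    split_ifs <;> simp [coeff_X_pow, Ne.symm he]
  · intro h
    simp [notMem_support_iff.mp h]

lemma gradedSubst_X_sub_two_mul_Jv_sub_one :
    gradedSubst (X - 2 * Jv - 1) = C (X - C 2) * X + C (-1) := by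
  simp only [map_sub, map_mul, map_one, map_ofNat, map_neg, gradedSubst_X, gradedSubst_Jv]
  ring

lemma gradedSubst_half_mul_X_sub_Jv :
    gradedSubst (cst (1 / 2) * X - Jv) = C (C (1 / 2) * (X - C 2)) * X + C 0 := by
  have hC : C (C (1 / 2)) * C (C 2) = (1 : ℝ[X][X]) := by simp only [← map_mul]; norm_num
  simp only [map_sub, map_mul, map_zero, gradedSubst_cst, gradedSubst_X, gradedSubst_Jv]
  linear_combination (X : ℝ[X][X]) * hC

lemma gradedSubst_Pnn (n : ℕ) : gradedSubst (Pnn n)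
    = (C (X - C 2) * X + C (-1)) * (C (X - C 2) * X + C (2 * (n : ℝ[X]) - 1))
      * rfp (C (X - C 1 : ℝ[X]) * X + C 0) n
      * rfp (C (C (1 / 2) * (X - C 2) : ℝ[X]) * X + C 0) n ^ 3 := by
  have h2 : gradedSubst (X + 2 * (n : R2[X]) - 2 * Jv - 1)
      = C (X - C 2) * X + C (2 * (n : ℝ[X]) - 1) := by
    simp only [map_sub, map_add, map_mul, map_one, map_ofNat, map_natCast, gradedSubst_X,
      gradedSubst_Jv]
    ring
  have h3 : gradedSubst (X - Jv) = C (X - C 1) * X + C 0 := by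
    simp only [map_sub, map_one, map_zero, gradedSubst_X, gradedSubst_Jv]
    ring
  simp only [Pnn, map_mul, map_add, gradedSubst_rfp, gradedSubst_Kv, add_zero,
    gradedSubst_X_sub_two_mul_Jv_sub_one, h2, h3, gradedSubst_half_mul_X_sub_Jv]
  ring

lemma gradedSubst_Dnnl (n l : ℕ) : gradedSubst (Dnnl n l)
    = C (C (1 / 2)) * (C X * X) ^ (l + 1) * (C (X - C 2) * X + C ((n : ℝ[X]) - 1))
      * rfp (C (C (1 / 2) * (X - C 2) : ℝ[X]) * X + C 0) n
      * rfp (C (X - C 2) * X + C (-1)) (2 * n + 1) := by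
  have h3 : gradedSubst (X + (n : R2[X]) - 2 * Jv - 1)
      = C (X - C 2) * X + C ((n : ℝ[X]) - 1) := by
    simp only [map_sub, map_add, map_mul, map_one, map_ofNat, map_natCast, gradedSubst_X,
      gradedSubst_Jv]
    ring
  simp only [Dnnl, map_mul, map_add, map_pow, gradedSubst_rfp, gradedSubst_Kv, add_zero,
    gradedSubst_cst, gradedSubst_X, gradedSubst_X_sub_two_mul_Jv_sub_one, h3,
    gradedSubst_half_mul_X_sub_Jv]

lemma C_half_mul_X_sub_C_two_ne_zero : (C (1 / 2) * (X - C 2) : ℝ[X]) ≠ 0 :=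
  mul_ne_zero (by simp) (X_sub_C_ne_zero (2 : ℝ))

lemma natDegree_gradedSubst_Pnn (n : ℕ) : (gradedSubst (Pnn n)).natDegree = 4 * n + 2 := by
  apply natDegree_eq_of_degree_eq_some
  rw [gradedSubst_Pnn]
  simp only [degree_mul, degree_pow, degree_linear (X_sub_C_ne_zero (2 : ℝ)),
    degree_rfp_C_mul_X_add_C (X_sub_C_ne_zero (1 : ℝ)),
    degree_rfp_C_mul_X_add_C C_half_mul_X_sub_C_two_ne_zero, nsmul_eq_mul]
  norm_cast
  ring

lemma leadingCoeff_gradedSubst_Pnn (n : ℕ) :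
    (gradedSubst (Pnn n)).leadingCoeff
      = C (1 / 2) ^ (3 * n) * (X - C 1) ^ n * (X - C 2) ^ (3 * n + 2) := by
  rw [gradedSubst_Pnn]
  simp only [leadingCoeff_mul, leadingCoeff_pow, leadingCoeff_linear (X_sub_C_ne_zero (2 : ℝ)),
    leadingCoeff_rfp_C_mul_X_add_C (X_sub_C_ne_zero (1 : ℝ)),
    leadingCoeff_rfp_C_mul_X_add_C C_half_mul_X_sub_C_two_ne_zero, mul_pow]
  ring

lemma natDegree_gradedSubst_Dnnl (n l : ℕ) :
    (gradedSubst (Dnnl n l)).natDegree = 3 * n + l + 3 := by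
  apply natDegree_eq_of_degree_eq_some
  rw [gradedSubst_Dnnl]
  simp only [degree_mul, degree_pow, degree_C (show C (1 / 2 : ℝ) ≠ 0 by simp),
    degree_C_mul_X X_ne_zero, degree_linear (X_sub_C_ne_zero (2 : ℝ)),
    degree_rfp_C_mul_X_add_C C_half_mul_X_sub_C_two_ne_zero,
    degree_rfp_C_mul_X_add_C (X_sub_C_ne_zero (2 : ℝ)), nsmul_eq_mul]
  norm_cast
  ring

lemma leadingCoeff_gradedSubst_Dnnl (n l : ℕ) :
    (gradedSubst (Dnnl n l)).leadingCoeff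
      = C (1 / 2) ^ (n + 1) * X ^ (l + 1) * (X - C 2) ^ (3 * n + 2) := by
  rw [gradedSubst_Dnnl]
  simp only [leadingCoeff_mul, leadingCoeff_pow, leadingCoeff_C, leadingCoeff_X, mul_pow,
    leadingCoeff_linear (X_sub_C_ne_zero (2 : ℝ)),
    leadingCoeff_rfp_C_mul_X_add_C C_half_mul_X_sub_C_two_ne_zero,
    leadingCoeff_rfp_C_mul_X_add_C (X_sub_C_ne_zero (2 : ℝ)), one_pow, mul_one]
  ring

lemma natDegree_leadingCoeff_gradedSubst_Dnnl (n l : ℕ) :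
    (gradedSubst (Dnnl n l)).leadingCoeff.natDegree = 3 * n + l + 3 := by
  rw [leadingCoeff_gradedSubst_Dnnl, ← C_pow, mul_assoc, natDegree_C_mul (by simp),
    natDegree_mul (pow_ne_zero _ X_ne_zero) (pow_ne_zero _ (X_sub_C_ne_zero (2 : ℝ))),
    natDegree_X_pow, natDegree_pow, natDegree_X_sub_C]
  ring

lemma coeff_zero_eq_of_leadingCoeff_identity {n l : ℕ} (hln : l + 1 ≤ n) {W E : ℝ[X]}
    (h : C (1 / 2) ^ (3 * n) * (X - C 1) ^ n * (X - C 2) ^ (3 * n + 2)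
      = C (1 / 2) ^ (n + 1) * X ^ (l + 1) * (X - C 2) ^ (3 * n + 2) * W + E)
    (hE : E.natDegree < 3 * n + l + 3) :
    W.coeff 0 = (-1) ^ (n - l - 1) * n.choose (l + 1) / 2 ^ (2 * n - 1) := by
  set g : ℝ[X] := C (1 / 2) ^ (n + 1) * (X - C 2) ^ (3 * n + 2)
  set f : ℝ[X] := C (1 / 2) ^ (2 * n - 1) * (X - C 1) ^ n with hf
  have hc : C (1 / 2 : ℝ) ^ (n + 1) ≠ 0 := pow_ne_zero _ (by simp)
  have hs : (X - C 2 : ℝ[X]) ^ (3 * n + 2) ≠ 0 := pow_ne_zero _ (X_sub_C_ne_zero 2)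
  have hg : g ≠ 0 := mul_ne_zero hc hs
  have hgdeg : g.natDegree = 3 * n + 2 := by
    rw [natDegree_mul hc hs,
      natDegree_pow, natDegree_pow, natDegree_C, natDegree_X_sub_C]
    ring
  have hgf : g * (f - X ^ (l + 1) * W) = E := by
    have hsplit : C (1 / 2 : ℝ) ^ (3 * n) = C (1 / 2) ^ (n + 1) * C (1 / 2) ^ (2 * n - 1) := by
      rw [← pow_add]
      congr 1
      omega
    rw [hsplit] at h
    linear_combination h
  have hW := coeff_zero_eq_of_natDegree_mul_sub_X_pow_mul_lt hg (k := l + 1)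
    (by rw [hgf, hgdeg]; omega)
  rw [hW, hf, ← C_pow, coeff_C_mul, sub_eq_add_neg, ← C_neg, coeff_X_add_C_pow,
    show n - (l + 1) = n - l - 1 by omega, one_div_pow]
  ring

theorem stmt_11 (n l : ℕ) (hn : 1 ≤ n) (hl : l ≤ n - 1)
    (Q Rem : Polynomial R2)
    (hdiv : Pnn n = Dnnl n l * Q + Rem)
    (hRem : Rem.degree < ((3 * n + l + 3 : ℕ) : WithBot ℕ)) :
    MvPolynomial.coeff (Finsupp.single (0 : Fin 2) (n - l - 1)) (Q.coeff 0)
      = (-1 : ℝ) ^ (n - l - 1) * (n.choose (l + 1) : ℝ) / 2 ^ (2 * n - 1) := by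
  have hln : l + 1 ≤ n := by omega
  have hRem' : Rem.natDegree < 3 * n + l + 3 := by
    rcases eq_or_ne Rem 0 with rfl | h
    · simp
    · exact (natDegree_lt_iff_degree_lt h).mpr hRem
  have hΦ : gradedSubst (Pnn n)
      = gradedSubst (Dnnl n l) * gradedSubst Q + gradedSubst Rem := by
    rw [hdiv, map_add, map_mul]
  have hδ : (gradedSubst (Dnnl n l)).natDegree + (n - l - 1)
      = (gradedSubst (Pnn n)).natDegree := by
    rw [natDegree_gradedSubst_Dnnl, natDegree_gradedSubst_Pnn]
    omega
  have hE (i : ℕ) : ((gradedSubst Rem).coeff i).natDegree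
      < (gradedSubst (Dnnl n l)).leadingCoeff.natDegree := by
    rw [natDegree_leadingCoeff_gradedSubst_Dnnl]
    exact (natDegree_coeff_gradedSubst_le Rem i).trans_lt hRem'
  have hQ := natDegree_le_of_eq_mul_add hΦ hδ.ge hE
  have htop := coeff_eq_of_eq_mul_add hΦ hQ
  rw [hδ, coeff_natDegree, leadingCoeff_gradedSubst_Pnn, leadingCoeff_gradedSubst_Dnnl] at htop
  rw [← coeff_zero_coeff_gradedSubst]
  exact coeff_zero_eq_of_leadingCoeff_identity hln htop
    ((natDegree_coeff_gradedSubst_le Rem _).trans_lt hRem')
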